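/- Theorem 4: Assume (A1)–(A3) and (A7). Then θ_psw^(m) = θ_sw^(m). -/

import Mathlib

open MeasureTheory Finset
open scoped Classical

namespace MSMPaper

noncomputable section

variable {Ω : Type*} [MeasurableSpace Ω] {𝓛 : Type*}

/-- Conditional probability `P(E | F) = P(E ∩ F) / P(F)` as a real number
(junk value `0` when `P F = 0`). -/
def cP (P : Measure Ω) (E F : Set Ω) : ℝ := (P (E ∩ F)).toReal / (P F).toReal

variable {K : ℕ}

/-- Event `Ā(t−1) = b̄` (treatment history up to, not including, time `t`). -/
def Apast (A : Fin K → Ω → Bool) (t : ℕ) (b : Fin K → Bool) : Set Ω :=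
  {ω | ∀ k : Fin K, (k : ℕ) < t → A k ω = b k}

/-- Event `L̄(t) = l̄` (covariate history up to and including time `t`). -/
def Lpast (L : Fin K → Ω → 𝓛) (t : ℕ) (l : Fin K → 𝓛) : Set Ω :=
  {ω | ∀ k : Fin K, (k : ℕ) ≤ t → L k ω = l k}

/-- Event `A̲(s, t−1) = b` (treatment history from time `s` up to, not including, `t`). -/
def Aseg (A : Fin K → Ω → Bool) (s t : ℕ) (b : Fin K → Bool) : Set Ω :=
  {ω | ∀ k : Fin K, s ≤ (k : ℕ) → (k : ℕ) < t → A k ω = b k}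

/-- Event `A̲(K−m) = a̲` for a (last-`m`) treatment vector `as`. -/
def EtrV (A : Fin K → Ω → Bool) (m : ℕ) (as : Fin K → Bool) : Set Ω :=
  {ω | ∀ k : Fin K, K - m ≤ (k : ℕ) → A k ω = as k}

/-- Event `A̲(K−m) = a_m` (constant `a` on the last `m` coordinates). -/
def Etr (A : Fin K → Ω → Bool) (m : ℕ) (a : Bool) : Set Ω :=
  EtrV A m (fun _ => a)

/-- Stabilized weights `W_sw`. -/
def Wsw (P : Measure Ω) (A : Fin K → Ω → Bool) (L : Fin K → Ω → 𝓛) : Ω → ℝ :=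
  fun ω => ∏ k : Fin K,
    cP P {ω' | A k ω' = A k ω} (Apast A (k : ℕ) (fun j => A j ω)) /
      cP P {ω' | A k ω' = A k ω}
        (Lpast L (k : ℕ) (fun j => L j ω) ∩ Apast A (k : ℕ) (fun j => A j ω))

/-- Restricted stabilized weights `W_rsw^(m)`. -/
def Wrsw (P : Measure Ω) (A : Fin K → Ω → Bool) (L : Fin K → Ω → 𝓛) (m : ℕ) : Ω → ℝ :=
  fun ω => ∏ k ∈ Finset.univ.filter (fun k : Fin K => K - m ≤ (k : ℕ)),
    cP P {ω' | A k ω' = A k ω} (Aseg A (K - m) (k : ℕ) (fun j => A j ω)) /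
      cP P {ω' | A k ω' = A k ω}
        (Lpast L (k : ℕ) (fun j => L j ω) ∩ Apast A (k : ℕ) (fun j => A j ω))

/-- Partial stabilized weights `W_psw^(m)`. -/
def Wpsw (P : Measure Ω) (A : Fin K → Ω → Bool) (L : Fin K → Ω → 𝓛) (m : ℕ) : Ω → ℝ :=
  fun ω => ∏ k ∈ Finset.univ.filter (fun k : Fin K => K - m ≤ (k : ℕ)),
    cP P {ω' | A k ω' = A k ω} (Apast A (k : ℕ) (fun j => A j ω)) /
      cP P {ω' | A k ω' = A k ω}
        (Lpast L (k : ℕ) (fun j => L j ω) ∩ Apast A (k : ℕ) (fun j => A j ω))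

/-- IP-weighted contrast `θ_W^(m)`. -/
def θW (P : Measure Ω) (A : Fin K → Ω → Bool) (m : ℕ) (W Y : Ω → ℝ) : ℝ :=
  (∫ ω in Etr A m true, W ω * Y ω ∂P) / (∫ ω in Etr A m true, W ω ∂P) -
    (∫ ω in Etr A m false, W ω * Y ω ∂P) / (∫ ω in Etr A m false, W ω ∂P)

/-- `rev j` is the time index `K − 1 − j`; the paper's coefficient `ψ_{j+1}`
multiplies `a(K − (j+1)) = a(rev j)`. -/
def rev (j : Fin K) : Fin K := ⟨K - 1 - (j : ℕ), by have := j.isLt; omega⟩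

/-- `θ^(K) = 𝔼[Y^{1_K}] − 𝔼[Y^{0_K}]`. -/
def θKfull (P : Measure Ω) (Ypot : (Fin K → Bool) → Ω → ℝ) : ℝ :=
  (∫ ω, Ypot (fun _ => true) ω ∂P) - ∫ ω, Ypot (fun _ => false) ω ∂P

/-- (A1) consistency. -/
def A1ok (A : Fin K → Ω → Bool) (Y : Ω → ℝ) (Ypot : (Fin K → Bool) → Ω → ℝ) : Prop :=
  ∀ (a : Fin K → Bool) (ω : Ω), (∀ k, A k ω = a k) → Y ω = Ypot a ω

/-- (A2) sequential exchangeability. -/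
def A2ok (P : Measure Ω) (A : Fin K → Ω → Bool) (L : Fin K → Ω → 𝓛)
    (Ypot : (Fin K → Bool) → Ω → ℝ) : Prop :=
  ∀ (t : Fin K) (a : Fin K → Bool) (B : Set ℝ), MeasurableSet B →
    ∀ (av : Bool) (l : Fin K → 𝓛) (b : Fin K → Bool),
      0 < P (Lpast L (t : ℕ) l ∩ Apast A (t : ℕ) b) →
      cP P ({ω | Ypot a ω ∈ B} ∩ {ω | A t ω = av}) (Lpast L (t : ℕ) l ∩ Apast A (t : ℕ) b) =
        cP P {ω | Ypot a ω ∈ B} (Lpast L (t : ℕ) l ∩ Apast A (t : ℕ) b) *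
          cP P {ω | A t ω = av} (Lpast L (t : ℕ) l ∩ Apast A (t : ℕ) b)

/-- (A3) positivity. -/
def A3ok (P : Measure Ω) (A : Fin K → Ω → Bool) (L : Fin K → Ω → 𝓛) : Prop :=
  ∀ (t : Fin K) (av : Bool) (l : Fin K → 𝓛) (b : Fin K → Bool),
    0 < P (Lpast L (t : ℕ) l ∩ Apast A (t : ℕ) b) →
    0 < cP P {ω | A t ω = av} (Lpast L (t : ℕ) l ∩ Apast A (t : ℕ) b)

/-- The marginal structural model `𝔼[Y^{ā}] = ψ₀ + Σ_{j=1}^K ψ_j a(K−j)`;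
here `ψ j` is the paper's `ψ_{j+1}`, the coefficient of `a(K−1−j)`. -/
def MSMeq (P : Measure Ω) (Ypot : (Fin K → Bool) → Ω → ℝ) (ψ0 : ℝ) (ψ : Fin K → ℝ) : Prop :=
  ∀ a : Fin K → Bool,
    (∫ ω, Ypot a ω ∂P) = ψ0 + ∑ j : Fin K, ψ j * (if a (rev j) = true then 1 else 0)

/-- (A5) conditional MSM given the past treatment history `Ā(K−m−1)`. -/
def A5ok (P : Measure Ω) (A : Fin K → Ω → Bool) (Ypot : (Fin K → Bool) → Ω → ℝ)
    (m : ℕ) : Prop :=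
  ∀ b : Fin K → Bool, 0 < P (Apast A (K - m) b) →
    ∃ (φ0 : ℝ) (φ : Fin K → ℝ), ∀ a : Fin K → Bool,
      (∫ ω in Apast A (K - m) b, Ypot a ω ∂P) / (P (Apast A (K - m) b)).toReal =
        φ0 + ∑ j : Fin K, φ j * (if a (rev j) = true then 1 else 0)

/-- `q_{j+1} = P(A(K−1−j)=1 | A̲(K−m)=1_m) − P(A(K−1−j)=1 | A̲(K−m)=0_m)`. -/
def qcoef (P : Measure Ω) (A : Fin K → Ω → Bool) (m : ℕ) (j : Fin K) : ℝ :=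
  cP P {ω | A (rev j) ω = true} (Etr A m true) -
    cP P {ω | A (rev j) ω = true} (Etr A m false)

end

/-!
Split each weighted integral over `A̲(K−m) = a_m` along the full treatment histories `ē`.
On `{Ā = ē}` the weight is a product of factors
`P(A(k)=ē(k) | Ā(k−1)) / P(A(k)=ē(k) | L̄(k), Ā(k−1))`, which are peeled off from `k = K−1`
down to the first one: on each covariate stratum `{L̄(k) = l̄, Ā(k−1) = ē}`, (A2) makes the
integral of `Y^ē` over `{A(k) = ē(k)}` equal to the propensity times the integral over the
stratum, and (A3) lets the propensity cancel. Hence, for a weight starting at time `s`,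
`∫_{Ā=ē} W Y = ∏_{k≥s} P(A(k)=ē(k) | Ā(k−1)=ē) · ∫_{Ā(s−1)=ē} Y^ē`.
For `W_sw` (`s = 0`) this telescopes to `P(Ā=ē) 𝔼[Y^ē]`; for `W_psw^(m)` (`s = K−m`), (A7) turns
the last integral into `P(Ā(K−m−1)=ē) 𝔼[Y^ē]` and the product telescopes to the same value.
With `Y` replaced by `1` the same argument matches the normalising integrals, so the two
contrasts agree term by term.
-/

noncomputable section Development

variable {Ω : Type*} {𝓛 : Type*} {K : ℕ}

lemma Apast_zero (A : Fin K → Ω → Bool) (b : Fin K → Bool) : Apast A 0 b = Set.univ := by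
  ext ω; simp [Apast]

lemma Apast_succ (A : Fin K → Ω → Bool) {t : ℕ} (ht : t < K) (e : Fin K → Bool) :
    Apast A (t + 1) e = Apast A t e ∩ {ω | A ⟨t, ht⟩ ω = e ⟨t, ht⟩} := by
  ext ω
  simp only [Apast, Set.mem_ofPred_eq, Set.mem_inter_iff]
  constructor
  · intro h
    exact ⟨fun k hk => h k (by omega), h ⟨t, ht⟩ (by simp)⟩
  · rintro ⟨hlt, heq⟩ k hk
    rcases Nat.lt_succ_iff_lt_or_eq.1 hk with hk | hk
    · exact hlt k hk
    · rwa [show k = ⟨t, ht⟩ from Fin.ext hk]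

lemma history_eq_of_mem_Apast {A : Fin K → Ω → Bool} {e : Fin K → Bool} {ω : Ω}
    (hω : ω ∈ Apast A K e) : (fun j => A j ω) = e :=
  funext fun k => hω k k.isLt

lemma Lpast_history_eq {L : Fin K → Ω → 𝓛} {t k : ℕ} {l : Fin K → 𝓛} {ω : Ω}
    (hω : ω ∈ Lpast L t l) (hk : k ≤ t) : Lpast L k (fun j => L j ω) = Lpast L k l := by
  ext ω'
  simp only [Lpast, Set.mem_ofPred_eq]
  refine forall_congr' fun j => forall_congr' fun hj => ?_
  rw [hω j (hj.trans hk)]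

/-- Padding with a fixed default after time `t` makes `Lpast L t` injective on these covariate
histories, so they index a partition of `Ω`. -/
def covHistories (𝓛 : Type*) [Fintype 𝓛] [Nonempty 𝓛] (K t : ℕ) : Finset (Fin K → 𝓛) :=
  Finset.univ.filter fun l => ∀ k : Fin K, t < (k : ℕ) → l k = Classical.ofNonempty

lemma iUnion_Lpast_covHistories [Fintype 𝓛] [Nonempty 𝓛] (L : Fin K → Ω → 𝓛) (t : ℕ) :
    ⋃ l ∈ covHistories 𝓛 K t, Lpast L t l = Set.univ := by
  refine Set.eq_univ_of_forall fun ω => Set.mem_iUnion₂.2 ?_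
  refine ⟨fun k => if (k : ℕ) ≤ t then L k ω else Classical.ofNonempty, ?_, fun k hk => ?_⟩
  · simp only [covHistories, Finset.mem_filter, Finset.mem_univ, true_and]
    exact fun k hk => if_neg (by omega)
  · exact (if_pos hk).symm

lemma disjoint_Lpast_covHistories [Fintype 𝓛] [Nonempty 𝓛] (L : Fin K → Ω → 𝓛) (t : ℕ)
    {l l' : Fin K → 𝓛} (hl : l ∈ covHistories 𝓛 K t) (hl' : l' ∈ covHistories 𝓛 K t)
    (hne : l ≠ l') :
    Disjoint (Lpast L t l) (Lpast L t l') := by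
  simp only [covHistories, Finset.mem_filter, Finset.mem_univ, true_and] at hl hl'
  refine Set.disjoint_left.2 fun ω h h' => hne (funext fun k => ?_)
  by_cases hk : (k : ℕ) ≤ t
  · rw [← h k hk, h' k hk]
  · rw [hl k (by omega), hl' k (by omega)]

def endingHistories (K m : ℕ) (a : Bool) : Finset (Fin K → Bool) :=
  Finset.univ.filter fun e => ∀ k : Fin K, K - m ≤ (k : ℕ) → e k = a

lemma Etr_eq_biUnion (A : Fin K → Ω → Bool) (m : ℕ) (a : Bool) :
    Etr A m a = ⋃ e ∈ endingHistories K m a, Apast A K e := by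
  ext ω
  simp only [Etr, EtrV, endingHistories, Set.mem_ofPred_eq, Set.mem_iUnion, Finset.mem_filter,
    Finset.mem_univ, true_and, exists_prop]
  refine ⟨fun h => ⟨fun k => A k ω, h, fun k _ => rfl⟩, fun ⟨e, he, hω⟩ k hk => ?_⟩
  rw [hω k k.isLt, he k hk]

variable [MeasurableSpace Ω]

lemma measurableSet_Apast {A : Fin K → Ω → Bool} (hA : ∀ k, Measurable (A k)) (t : ℕ)
    (b : Fin K → Bool) : MeasurableSet (Apast A t b) := by
  simp only [Apast, Set.ofPred_forall]
  exact .iInter fun k => .iInter fun _ => hA k (measurableSet_singleton (b k))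

lemma measurableSet_Lpast [MeasurableSpace 𝓛] [MeasurableSingletonClass 𝓛]
    {L : Fin K → Ω → 𝓛} (hL : ∀ k, Measurable (L k)) (t : ℕ) (l : Fin K → 𝓛) :
    MeasurableSet (Lpast L t l) := by
  simp only [Lpast, Set.ofPred_forall]
  exact .iInter fun k => .iInter fun _ => hL k (measurableSet_singleton (l k))

lemma setIntegral_eq_sum_covHistories [Fintype 𝓛] [Nonempty 𝓛] [MeasurableSpace 𝓛]
    [MeasurableSingletonClass 𝓛] {P : Measure Ω} {L : Fin K → Ω → 𝓛} (hL : ∀ k, Measurable (L k))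
    (t : ℕ) {X : Set Ω} (hX : MeasurableSet X) {f : Ω → ℝ} (hf : IntegrableOn f X P) :
    ∫ ω in X, f ω ∂P = ∑ l ∈ covHistories 𝓛 K t, ∫ ω in Lpast L t l ∩ X, f ω ∂P := by
  have hpart : X = ⋃ l ∈ covHistories 𝓛 K t, Lpast L t l ∩ X := by
    rw [← Set.iUnion₂_inter, iUnion_Lpast_covHistories, Set.univ_inter]
  conv_lhs => rw [hpart]
  exact integral_biUnion_finset _ (fun l _ => (measurableSet_Lpast hL t l).inter hX)
    (fun l hl l' hl' hne => (disjoint_Lpast_covHistories L t hl hl' hne).mono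
      Set.inter_subset_left Set.inter_subset_left)
    (fun l _ => hf.mono_set Set.inter_subset_right)

lemma cP_nonneg (P : Measure Ω) (E F : Set Ω) : 0 ≤ cP P E F :=
  div_nonneg ENNReal.toReal_nonneg ENNReal.toReal_nonneg

lemma cP_mul_measure (P : Measure Ω) [IsFiniteMeasure P] (E F : Set Ω) :
    cP P E F * (P F).toReal = (P (E ∩ F)).toReal := by
  by_cases hF : P F = 0
  · simp [hF, measure_mono_null Set.inter_subset_right hF]
  · rw [cP, div_mul_cancel₀ _ (ENNReal.toReal_ne_zero.2 ⟨hF, measure_ne_top P F⟩)]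

lemma measure_inter_eq_ofReal_mul_of_cP_eq {P : Measure Ω} [IsFiniteMeasure P]
    {E E' F : Set Ω} (hF : P F ≠ 0) {c : ℝ} (hc : 0 ≤ c) (h : cP P E F = c * cP P E' F) :
    P (E ∩ F) = ENNReal.ofReal c * P (E' ∩ F) := by
  have hF' : (P F).toReal ≠ 0 := ENNReal.toReal_ne_zero.2 ⟨hF, measure_ne_top P F⟩
  rw [cP, cP, ← mul_div_assoc, div_left_inj' hF'] at h
  rw [← ENNReal.ofReal_toReal (measure_ne_top P (E ∩ F)), h, ENNReal.ofReal_mul hc,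
    ENNReal.ofReal_toReal (measure_ne_top P _)]

lemma setIntegral_eq_mul_of_measure_preimage {P : Measure Ω} {f : Ω → ℝ}
    (hf : AEMeasurable f P) {S T : Set Ω} (hS : MeasurableSet S) (hT : MeasurableSet T)
    {c : ℝ} (hc : 0 ≤ c)
    (h : ∀ B : Set ℝ, MeasurableSet B → P (f ⁻¹' B ∩ S) = ENNReal.ofReal c * P (f ⁻¹' B ∩ T)) :
    ∫ ω in S, f ω ∂P = c * ∫ ω in T, f ω ∂P := by
  have hmap : (P.restrict S).map f = ENNReal.ofReal c • (P.restrict T).map f := by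
    ext B hB
    rw [Measure.map_apply_of_aemeasurable hf.restrict hB, Measure.smul_apply,
      Measure.map_apply_of_aemeasurable hf.restrict hB, Measure.restrict_apply' hS,
      Measure.restrict_apply' hT, h B hB, smul_eq_mul]
  calc ∫ ω in S, f ω ∂P = ∫ x, x ∂(P.restrict S).map f :=
        (integral_map (f := fun x : ℝ => x) hf.restrict aestronglyMeasurable_id).symm
    _ = c * ∫ ω in T, f ω ∂P := by
        rw [hmap, integral_smul_measure,
          integral_map (f := fun x : ℝ => x) hf.restrict aestronglyMeasurable_id,
          ENNReal.toReal_ofReal hc, smul_eq_mul]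

lemma setIntegral_eq_measure_mul_integral_of_indep {P : Measure Ω} [IsFiniteMeasure P]
    {f : Ω → ℝ} (hf : AEMeasurable f P) {S : Set Ω} (hS : MeasurableSet S)
    (h : ∀ B : Set ℝ, MeasurableSet B → P (f ⁻¹' B ∩ S) = P (f ⁻¹' B) * P S) :
    ∫ ω in S, f ω ∂P = (P S).toReal * ∫ ω, f ω ∂P := by
  conv_rhs => rw [← setIntegral_univ]
  refine setIntegral_eq_mul_of_measure_preimage hf hS .univ ENNReal.toReal_nonneg fun B hB => ?_
  rw [Set.inter_univ, ENNReal.ofReal_toReal (measure_ne_top P S), h B hB, mul_comm]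

def window (K s t : ℕ) : Finset (Fin K) :=
  Finset.univ.filter fun k => s ≤ (k : ℕ) ∧ (k : ℕ) < t

lemma window_eq_filter (K s : ℕ) : window K s K = Finset.univ.filter fun k : Fin K => s ≤ (k : ℕ) :=
  Finset.filter_congr fun k _ => and_iff_left k.isLt

lemma window_self (K s : ℕ) : window K s s = ∅ := by
  rw [window, Finset.filter_eq_empty_iff]; intro k _; omega

lemma prod_window_succ {M : Type*} [CommMonoid M] (f : Fin K → M) {s t : ℕ} (ht : t < K)
    (hst : s ≤ t) : ∏ k ∈ window K s (t + 1), f k = f ⟨t, ht⟩ * ∏ k ∈ window K s t, f k := by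
  have hins : window K s (t + 1) = insert ⟨t, ht⟩ (window K s t) := by
    ext k
    simp only [window, Finset.mem_filter, Finset.mem_univ, true_and, Finset.mem_insert,
      Fin.ext_iff]
    omega
  rw [hins, Finset.prod_insert (by simp [window])]

def treatProb (P : Measure Ω) (A : Fin K → Ω → Bool) (e : Fin K → Bool) (k : Fin K) : ℝ :=
  cP P {ω | A k ω = e k} (Apast A k e)

def propensity (P : Measure Ω) (A : Fin K → Ω → Bool) (L : Fin K → Ω → 𝓛)
    (e : Fin K → Bool) (l : Fin K → 𝓛) (k : Fin K) : ℝ :=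
  cP P {ω | A k ω = e k} (Lpast L k l ∩ Apast A k e)

def weightFactor (P : Measure Ω) (A : Fin K → Ω → Bool) (L : Fin K → Ω → 𝓛)
    (e : Fin K → Bool) (k : Fin K) (ω : Ω) : ℝ :=
  treatProb P A e k / propensity P A L e (fun j => L j ω) k

lemma treatProb_mul_measure (P : Measure Ω) [IsFiniteMeasure P] (A : Fin K → Ω → Bool)
    (e : Fin K → Bool) {t : ℕ} (ht : t < K) :
    treatProb P A e ⟨t, ht⟩ * (P (Apast A t e)).toReal = (P (Apast A (t + 1) e)).toReal := by
  rw [treatProb, cP_mul_measure, Apast_succ A ht, Set.inter_comm]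

lemma prod_treatProb_mul_measure (P : Measure Ω) [IsFiniteMeasure P] (A : Fin K → Ω → Bool)
    (e : Fin K → Bool) {s t : ℕ} (hst : s ≤ t) (htK : t ≤ K) :
    (∏ k ∈ window K s t, treatProb P A e k) * (P (Apast A s e)).toReal =
      (P (Apast A t e)).toReal := by
  induction t, hst using Nat.le_induction with
  | base => simp [window_self]
  | succ t hst ih =>
    rw [prod_window_succ _ htK hst, mul_assoc, ih (by omega), treatProb_mul_measure]

/-- Integral form of sequential exchangeability along the treatment history `e`. -/
def SeqMeanIndep (P : Measure Ω) (A : Fin K → Ω → Bool) (L : Fin K → Ω → 𝓛)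
    (e : Fin K → Bool) (Z : Ω → ℝ) : Prop :=
  ∀ (t : Fin K) (l : Fin K → 𝓛),
    ∫ ω in Lpast L t l ∩ Apast A t e ∩ {ω | A t ω = e t}, Z ω ∂P =
      propensity P A L e l t * ∫ ω in Lpast L t l ∩ Apast A t e, Z ω ∂P

lemma seqMeanIndep_one (P : Measure Ω) [IsFiniteMeasure P] (A : Fin K → Ω → Bool)
    (L : Fin K → Ω → 𝓛) (e : Fin K → Bool) : SeqMeanIndep P A L e fun _ => 1 := by
  intro t l
  simp only [setIntegral_const, smul_eq_mul, mul_one, measureReal_def]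
  rw [propensity, cP_mul_measure, Set.inter_comm]

lemma seqMeanIndep_of_A2ok [MeasurableSpace 𝓛] [MeasurableSingletonClass 𝓛]
    {P : Measure Ω} [IsFiniteMeasure P] {A : Fin K → Ω → Bool} {L : Fin K → Ω → 𝓛}
    (hA : ∀ k, Measurable (A k)) (hL : ∀ k, Measurable (L k))
    {Ypot : (Fin K → Bool) → Ω → ℝ} (hA2 : A2ok P A L Ypot) {a : Fin K → Bool}
    (hY : AEMeasurable (Ypot a) P) (e : Fin K → Bool) : SeqMeanIndep P A L e (Ypot a) := by
  intro t l
  set H := Lpast L t l ∩ Apast A t e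
  by_cases h0 : P H = 0
  · rw [Measure.restrict_eq_zero.2 (measure_mono_null Set.inter_subset_left h0),
      Measure.restrict_eq_zero.2 h0, integral_zero_measure, mul_zero]
  · have hH : MeasurableSet H := (measurableSet_Lpast hL t l).inter (measurableSet_Apast hA t e)
    refine setIntegral_eq_mul_of_measure_preimage hY (hH.inter (hA t (measurableSet_singleton _)))
      hH (cP_nonneg _ _ _) fun B hB => ?_
    rw [Set.inter_comm H, ← Set.inter_assoc]
    exact measure_inter_eq_ofReal_mul_of_cP_eq h0 (cP_nonneg _ _ _)
      ((hA2 t a B hB (e t) l e (pos_iff_ne_zero.2 h0)).trans (mul_comm _ _))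

section Peeling

variable {P : Measure Ω} {A : Fin K → Ω → Bool} {L : Fin K → Ω → 𝓛} {e : Fin K → Bool}
  {Z : Ω → ℝ}

lemma weightFactor_eq_of_mem_Lpast {t : ℕ} {k : Fin K} (hk : (k : ℕ) ≤ t) {l : Fin K → 𝓛}
    {ω : Ω} (hω : ω ∈ Lpast L t l) :
    weightFactor P A L e k ω = treatProb P A e k / propensity P A L e l k := by
  rw [weightFactor, propensity, propensity, Lpast_history_eq hω hk]

lemma integrable_prod_weightFactor_mul [Finite 𝓛] [MeasurableSpace 𝓛]
    [MeasurableSingletonClass 𝓛] (hL : ∀ k, Measurable (L k)) (S : Finset (Fin K))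
    (hZ : Integrable Z P) :
    Integrable (fun ω => (∏ k ∈ S, weightFactor P A L e k ω) * Z ω) P := by
  set G : (Fin K → 𝓛) → ℝ := fun l => ∏ k ∈ S, treatProb P A e k / propensity P A L e l k
  obtain ⟨C, hC⟩ := (Set.finite_range fun l => ‖G l‖).bddAbove
  exact hZ.bdd_mul ((measurable_of_finite G).comp (measurable_pi_lambda _ hL)).aestronglyMeasurable
    (ae_of_all _ fun ω => hC ⟨fun j => L j ω, rfl⟩)

lemma setIntegral_stratum_weightFactor (hA3 : A3ok P A L) (hZ : SeqMeanIndep P A L e Z)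
    (t : Fin K) (l : Fin K → 𝓛) (c : ℝ) :
    ∫ ω in Lpast L t l ∩ Apast A t e ∩ {ω | A t ω = e t},
        treatProb P A e t / propensity P A L e l t * (c * Z ω) ∂P =
      treatProb P A e t * ∫ ω in Lpast L t l ∩ Apast A t e, c * Z ω ∂P := by
  simp only [integral_const_mul]
  rw [hZ t l]
  by_cases h0 : P (Lpast L t l ∩ Apast A t e) = 0
  · rw [Measure.restrict_eq_zero.2 h0, integral_zero_measure]
    ring
  · have : propensity P A L e l t ≠ 0 := (hA3 t (e t) l e (pos_iff_ne_zero.2 h0)).ne'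
    field_simp

lemma setIntegral_Apast_succ_prod_weightFactor [Fintype 𝓛] [Nonempty 𝓛] [MeasurableSpace 𝓛]
    [MeasurableSingletonClass 𝓛] (hA : ∀ k, Measurable (A k))
    (hL : ∀ k, Measurable (L k)) (hA3 : A3ok P A L) (hZi : Integrable Z P)
    (hZ : SeqMeanIndep P A L e Z) {s t : ℕ} (hst : s ≤ t) (htK : t < K) :
    ∫ ω in Apast A (t + 1) e, (∏ k ∈ window K s (t + 1), weightFactor P A L e k ω) * Z ω ∂P =
      treatProb P A e ⟨t, htK⟩ *
        ∫ ω in Apast A t e, (∏ k ∈ window K s t, weightFactor P A L e k ω) * Z ω ∂P := by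
  have hle : ∀ k ∈ window K s t, (k : ℕ) ≤ t := fun k hk => by
    simp only [window, Finset.mem_filter] at hk; omega
  have hstratum : ∀ l : Fin K → 𝓛, MeasurableSet (Lpast L t l ∩ Apast A t e) := fun l =>
    (measurableSet_Lpast hL t l).inter (measurableSet_Apast hA t e)
  rw [setIntegral_eq_sum_covHistories hL t (measurableSet_Apast hA _ e)
      (integrable_prod_weightFactor_mul hL _ hZi).integrableOn,
    setIntegral_eq_sum_covHistories hL t (measurableSet_Apast hA _ e)
      (integrable_prod_weightFactor_mul hL _ hZi).integrableOn, Finset.mul_sum]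
  refine Finset.sum_congr rfl fun l _ => ?_
  set c := ∏ k ∈ window K s t, treatProb P A e k / propensity P A L e l k
  have hprod : ∀ ω ∈ Lpast L t l, ∏ k ∈ window K s t, weightFactor P A L e k ω = c :=
    fun ω hω => Finset.prod_congr rfl fun k hk => weightFactor_eq_of_mem_Lpast (hle k hk) hω
  rw [Apast_succ A htK, ← Set.inter_assoc]
  calc _ = ∫ ω in Lpast L t l ∩ Apast A t e ∩ {ω | A ⟨t, htK⟩ ω = e ⟨t, htK⟩},
          treatProb P A e ⟨t, htK⟩ / propensity P A L e l ⟨t, htK⟩ * (c * Z ω) ∂P := by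
        refine setIntegral_congr_fun ((hstratum l).inter (hA _ (measurableSet_singleton _)))
          fun ω hω => ?_
        rw [prod_window_succ _ htK hst, hprod ω hω.1.1,
          weightFactor_eq_of_mem_Lpast le_rfl hω.1.1, mul_assoc]
    _ = treatProb P A e ⟨t, htK⟩ * ∫ ω in Lpast L t l ∩ Apast A t e, c * Z ω ∂P :=
        setIntegral_stratum_weightFactor hA3 hZ ⟨t, htK⟩ l c
    _ = _ := by
        congr 1
        refine setIntegral_congr_fun (hstratum l) fun ω hω => ?_
        simp only [hprod ω hω.1]

lemma setIntegral_Apast_prod_weightFactor [Fintype 𝓛] [Nonempty 𝓛] [MeasurableSpace 𝓛]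
    [MeasurableSingletonClass 𝓛] (hA : ∀ k, Measurable (A k))
    (hL : ∀ k, Measurable (L k)) (hA3 : A3ok P A L) (hZi : Integrable Z P)
    (hZ : SeqMeanIndep P A L e Z) {s t : ℕ} (hst : s ≤ t) (htK : t ≤ K) :
    ∫ ω in Apast A t e, (∏ k ∈ window K s t, weightFactor P A L e k ω) * Z ω ∂P =
      (∏ k ∈ window K s t, treatProb P A e k) * ∫ ω in Apast A s e, Z ω ∂P := by
  induction t, hst using Nat.le_induction with
  | base => simp [window_self]
  | succ t hst ih =>
    rw [setIntegral_Apast_succ_prod_weightFactor hA hL hA3 hZi hZ hst htK, ih (by omega),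
      prod_window_succ _ htK hst, mul_assoc]

lemma setIntegral_Apast_full_prod_weightFactor [Fintype 𝓛] [Nonempty 𝓛] [MeasurableSpace 𝓛]
    [MeasurableSingletonClass 𝓛] [IsFiniteMeasure P] (hA : ∀ k, Measurable (A k))
    (hL : ∀ k, Measurable (L k)) (hA3 : A3ok P A L) (hZi : Integrable Z P)
    (hZ : SeqMeanIndep P A L e Z) {s : ℕ} (hs : s ≤ K)
    (hindep : ∫ ω in Apast A s e, Z ω ∂P = (P (Apast A s e)).toReal * ∫ ω, Z ω ∂P) :
    ∫ ω in Apast A K e, (∏ k ∈ window K s K, weightFactor P A L e k ω) * Z ω ∂P =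
      (P (Apast A K e)).toReal * ∫ ω, Z ω ∂P := by
  rw [setIntegral_Apast_prod_weightFactor hA hL hA3 hZi hZ hs le_rfl, hindep, ← mul_assoc,
    prod_treatProb_mul_measure P A e hs le_rfl]

end Peeling

lemma setIntegral_Etr_eq_sum {P : Measure Ω} {A : Fin K → Ω → Bool} (hA : ∀ k, Measurable (A k))
    (m : ℕ) (a : Bool) {f : Ω → ℝ} {g : (Fin K → Bool) → Ω → ℝ} (hg : ∀ e, Integrable (g e) P)
    (hfg : ∀ e, ∀ ω ∈ Apast A K e, f ω = g e ω) :
    ∫ ω in Etr A m a, f ω ∂P = ∑ e ∈ endingHistories K m a, ∫ ω in Apast A K e, g e ω ∂P := by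
  have hdisj : Set.Pairwise (endingHistories K m a : Set (Fin K → Bool))
      (Function.onFun Disjoint fun e => Apast A K e) := fun e _ e' _ hne =>
    Set.disjoint_left.2 fun ω h h' =>
      hne ((history_eq_of_mem_Apast h).symm.trans (history_eq_of_mem_Apast h'))
  rw [Etr_eq_biUnion, integral_biUnion_finset _ (fun e _ => measurableSet_Apast hA K e) hdisj
    fun e _ => (hg e).integrableOn.congr_fun (fun ω hω => (hfg e ω hω).symm)
      (measurableSet_Apast hA K e)]
  exact Finset.sum_congr rfl fun e _ => setIntegral_congr_fun (measurableSet_Apast hA K e) (hfg e)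

section Weights

variable [Fintype 𝓛] [Nonempty 𝓛] [MeasurableSpace 𝓛] [MeasurableSingletonClass 𝓛]
  {P : Measure Ω} [IsFiniteMeasure P] {A : Fin K → Ω → Bool} {L : Fin K → Ω → 𝓛}
  {W : Ω → ℝ} {s : ℕ}

lemma setIntegral_Etr_weight_mul_eq_sum (hA : ∀ k, Measurable (A k))
    (hL : ∀ k, Measurable (L k)) (hA3 : A3ok P A L) {Y : Ω → ℝ}
    {Ypot : (Fin K → Bool) → Ω → ℝ} (hYpi : ∀ a, Integrable (Ypot a) P)
    (hA1 : A1ok A Y Ypot) (hA2 : A2ok P A L Ypot) (hs : s ≤ K)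
    (hW : ∀ e, ∀ ω ∈ Apast A K e, W ω = ∏ k ∈ window K s K, weightFactor P A L e k ω)
    (hindep : ∀ e, ∫ ω in Apast A s e, Ypot e ω ∂P = (P (Apast A s e)).toReal * ∫ ω, Ypot e ω ∂P)
    (m : ℕ) (a : Bool) :
    ∫ ω in Etr A m a, W ω * Y ω ∂P =
      ∑ e ∈ endingHistories K m a, (P (Apast A K e)).toReal * ∫ ω, Ypot e ω ∂P := by
  rw [setIntegral_Etr_eq_sum hA m a (fun e => integrable_prod_weightFactor_mul hL _ (hYpi e))
    fun e ω hω => by rw [hW e ω hω, hA1 e ω fun k => hω k k.isLt]]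
  exact Finset.sum_congr rfl fun e _ => setIntegral_Apast_full_prod_weightFactor hA hL hA3
    (hYpi e) (seqMeanIndep_of_A2ok hA hL hA2 (hYpi e).aemeasurable e) hs (hindep e)

lemma setIntegral_Etr_weight_eq_sum (hA : ∀ k, Measurable (A k))
    (hL : ∀ k, Measurable (L k)) (hA3 : A3ok P A L) (hs : s ≤ K)
    (hW : ∀ e, ∀ ω ∈ Apast A K e, W ω = ∏ k ∈ window K s K, weightFactor P A L e k ω)
    (m : ℕ) (a : Bool) :
    ∫ ω in Etr A m a, W ω ∂P = ∑ e ∈ endingHistories K m a, (P (Apast A K e)).toReal := by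
  rw [setIntegral_Etr_eq_sum hA m a (fun e => integrable_prod_weightFactor_mul hL _
    (integrable_const 1)) fun e ω hω => by rw [hW e ω hω, mul_one]]
  refine Finset.sum_congr rfl fun e _ => ?_
  rw [setIntegral_Apast_prod_weightFactor hA hL hA3 (integrable_const 1)
    (seqMeanIndep_one P A L e) hs le_rfl, setIntegral_const, smul_eq_mul, mul_one,
    measureReal_def, prod_treatProb_mul_measure P A e hs le_rfl]

end Weights

lemma weightFactor_eq_of_mem_Apast (P : Measure Ω) {A : Fin K → Ω → Bool} (L : Fin K → Ω → 𝓛)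
    {e : Fin K → Bool} {ω : Ω} (hω : ω ∈ Apast A K e) (k : Fin K) :
    cP P {ω' | A k ω' = A k ω} (Apast A k fun j => A j ω) /
        cP P {ω' | A k ω' = A k ω} (Lpast L k (fun j => L j ω) ∩ Apast A k fun j => A j ω) =
      weightFactor P A L e k ω := by
  simp only [weightFactor, treatProb, propensity, history_eq_of_mem_Apast hω, hω k k.isLt]

lemma Wsw_eq_prod_weightFactor (P : Measure Ω) (A : Fin K → Ω → Bool) (L : Fin K → Ω → 𝓛)
    {e : Fin K → Bool} {ω : Ω} (hω : ω ∈ Apast A K e) :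
    Wsw P A L ω = ∏ k ∈ window K 0 K, weightFactor P A L e k ω := by
  rw [Wsw, window_eq_filter, Finset.filter_true_of_mem fun k _ => Nat.zero_le _]
  exact Finset.prod_congr rfl fun k _ => weightFactor_eq_of_mem_Apast P L hω k

lemma Wpsw_eq_prod_weightFactor (P : Measure Ω) (A : Fin K → Ω → Bool) (L : Fin K → Ω → 𝓛)
    (m : ℕ) {e : Fin K → Bool} {ω : Ω} (hω : ω ∈ Apast A K e) :
    Wpsw P A L m ω = ∏ k ∈ window K (K - m) K, weightFactor P A L e k ω := by
  rw [Wpsw, window_eq_filter]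
  exact Finset.prod_congr rfl fun k _ => weightFactor_eq_of_mem_Apast P L hω k

end Development

theorem theorem4_general
    {Ω : Type*} [MeasurableSpace Ω] {𝓛 : Type*} [MeasurableSpace 𝓛]
    [Fintype 𝓛] [Nonempty 𝓛] [MeasurableSingletonClass 𝓛]
    (P : Measure Ω) [IsProbabilityMeasure P]
    {K m : ℕ}
    (A : Fin K → Ω → Bool) (L : Fin K → Ω → 𝓛)
    (hA : ∀ k, Measurable (A k)) (hL : ∀ k, Measurable (L k))
    (Y : Ω → ℝ)
    (Ypot : (Fin K → Bool) → Ω → ℝ)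
    (hYpi : ∀ a, Integrable (Ypot a) P)
    (hA1 : A1ok A Y Ypot) (hA2 : A2ok P A L Ypot) (hA3 : A3ok P A L)
    -- (A7): `Y^{ā}` is independent of the past treatment history `Ā(K−m−1)`
    (hA7 : ∀ (a : Fin K → Bool) (B : Set ℝ), MeasurableSet B → ∀ b : Fin K → Bool,
      P ({ω | Ypot a ω ∈ B} ∩ Apast A (K - m) b) =
        P {ω | Ypot a ω ∈ B} * P (Apast A (K - m) b)) :
    θW P A m (Wpsw P A L m) Y = θW P A m (Wsw P A L) Y := by
  have hsw_indep : ∀ e, ∫ ω in Apast A 0 e, Ypot e ω ∂P =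
      (P (Apast A 0 e)).toReal * ∫ ω, Ypot e ω ∂P := fun e => by
    rw [Apast_zero, setIntegral_univ, measure_univ, ENNReal.toReal_one, one_mul]
  have hpsw_indep : ∀ e, ∫ ω in Apast A (K - m) e, Ypot e ω ∂P =
      (P (Apast A (K - m) e)).toReal * ∫ ω, Ypot e ω ∂P := fun e =>
    setIntegral_eq_measure_mul_integral_of_indep (hYpi e).aemeasurable
      (measurableSet_Apast hA _ e) (hA7 e · · e)
  simp only [θW,
    setIntegral_Etr_weight_mul_eq_sum hA hL hA3 hYpi hA1 hA2 (Nat.sub_le K m)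
      (fun _ _ => Wpsw_eq_prod_weightFactor P A L m) hpsw_indep,
    setIntegral_Etr_weight_mul_eq_sum hA hL hA3 hYpi hA1 hA2 (Nat.zero_le K)
      (fun _ _ => Wsw_eq_prod_weightFactor P A L) hsw_indep,
    setIntegral_Etr_weight_eq_sum hA hL hA3 (Nat.sub_le K m)
      (fun _ _ => Wpsw_eq_prod_weightFactor P A L m),
    setIntegral_Etr_weight_eq_sum hA hL hA3 (Nat.zero_le K)
      (fun _ _ => Wsw_eq_prod_weightFactor P A L)]

/-- Theorem 4 of the paper: under (A1)–(A3) and (A7), `θ_psw^(m) = θ_sw^(m)`. -/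
theorem theorem4
    {Ω : Type*} [MeasurableSpace Ω] {𝓛 : Type*} [MeasurableSpace 𝓛]
    [Fintype 𝓛] [Nonempty 𝓛] [MeasurableSingletonClass 𝓛]
    (P : Measure Ω) [IsProbabilityMeasure P]
    {K m : ℕ} (hK : 1 ≤ K) (hm1 : 1 ≤ m) (hmK : m ≤ K)
    (A : Fin K → Ω → Bool) (L : Fin K → Ω → 𝓛)
    (hA : ∀ k, Measurable (A k)) (hL : ∀ k, Measurable (L k))
    (Y : Ω → ℝ) (hY : Measurable Y)
    (Ypot : (Fin K → Bool) → Ω → ℝ)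
    (hYpm : ∀ a, Measurable (Ypot a)) (hYpi : ∀ a, Integrable (Ypot a) P)
    (hpos1 : 0 < P (Etr A m true)) (hpos0 : 0 < P (Etr A m false))
    (hA1 : A1ok A Y Ypot) (hA2 : A2ok P A L Ypot) (hA3 : A3ok P A L)
    -- (A7): `Y^{ā}` is independent of the past treatment history `Ā(K−m−1)`
    (hA7 : ∀ (a : Fin K → Bool) (B : Set ℝ), MeasurableSet B → ∀ b : Fin K → Bool,
      P ({ω | Ypot a ω ∈ B} ∩ Apast A (K - m) b) =
        P {ω | Ypot a ω ∈ B} * P (Apast A (K - m) b)) :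
    θW P A m (Wpsw P A L m) Y = θW P A m (Wsw P A L) Y :=
  theorem4_general P A L hA hL Y Ypot hYpi hA1 hA2 hA3 hA7

end MSMPaper
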